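/- arXiv:2409.20082 — 4 statements merged into one kernel-verified Lean document; each statement's English description precedes it below -/
import Mathlib

section
/- Let dA, dE ≥ 1, let ψ ∈ ℂ^{dA} ⊗ ℂ^{dE} be a unit vector, and let M, Q be dA × dA complex matrices. Then ‖(M ⊗ I)|ψ⟩⟨ψ| − (Q ⊗ I)|ψ⟩⟨ψ|‖₁ ≤ ‖M − Q‖₁, where I is the dE × dE identity matrix. -/
open scoped Matrix Kronecker BigOperators ComplexOrder

/-- The trace norm of a complex matrix: `‖A‖₁ = tr √(Aᴴ A)`. -/
noncomputable def traceNorm {n : Type*} [Fintype n] [DecidableEq n]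
    (A : Matrix n n ℂ) : ℝ :=
  ((Matrix.posSemidef_conjTranspose_mul_self A).1.eigenvectorUnitary.1 *
      Matrix.diagonal (((↑) : ℝ → ℂ) ∘ Real.sqrt ∘ (Matrix.posSemidef_conjTranspose_mul_self A).1.eigenvalues) *
      (star (Matrix.posSemidef_conjTranspose_mul_self A).1.eigenvectorUnitary : Matrix n n ℂ)).trace.re

/-- The rank-one outer product `|v⟩⟨v|`. -/
def outer {n : Type*} (v : n → ℂ) : Matrix n n ℂ :=
  Matrix.of fun i j => v i * (starRingEnd ℂ) (v j)

/-- `v` is a unit vector. -/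
def IsUnitVec {n : Type*} [Fintype n] (v : n → ℂ) : Prop :=
  ∑ i, ‖v i‖ ^ 2 = 1

/-- Partial trace over the second (E) tensor factor. -/
noncomputable def trE {dA dE : ℕ} (M : Matrix (Fin dA × Fin dE) (Fin dA × Fin dE) ℂ) :
    Matrix (Fin dA) (Fin dA) ℂ :=
  Matrix.of fun i j => ∑ k : Fin dE, M (i, k) (j, k)

/-- Partial trace over the first (A) tensor factor. -/
noncomputable def trA {dA dE : ℕ} (M : Matrix (Fin dA × Fin dE) (Fin dA × Fin dE) ℂ) :
    Matrix (Fin dE) (Fin dE) ℂ :=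
  Matrix.of fun i j => ∑ k : Fin dA, M (k, i) (k, j)

/-!
The difference of the two operators is the rank-one matrix `|u⟩⟨ψ|` with `u = ((M - Q) ⊗ I) ψ`.
As `ψ` is a unit vector, `√((|u⟩⟨ψ|)ᴴ |u⟩⟨ψ|) = ‖u‖ |ψ⟩⟨ψ|`, so its trace norm is `‖u‖`.
Writing `ψ_k = ψ(·, k)`, we have `‖u‖² = ∑ₖ ‖(M - Q) ψ_k‖²`, and each term is at most
`‖M - Q‖₁² ‖ψ_k‖²`: by Cauchy–Schwarz the operator norm is bounded by the Frobenius norm, whose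
square `∑ λᵢ` (eigenvalues of `(M - Q)ᴴ (M - Q)`) is at most `(∑ √λᵢ)² = ‖M - Q‖₁²`.
-/

namespace Matrix

variable {l m n p : Type*}

lemma sub_kronecker {α : Type*} [Ring α] (A₁ A₂ : Matrix l m α) (B : Matrix n p α) :
    (A₁ - A₂) ⊗ₖ B = A₁ ⊗ₖ B - A₂ ⊗ₖ B := by
  ext
  simp [sub_mul]

lemma kronecker_one_mulVec_apply {α : Type*} [NonAssocSemiring α] [Fintype m] [Fintype p]
    [DecidableEq p] (D : Matrix m m α) (ψ : m × p → α) (i : m) (k : p) :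
    ((D ⊗ₖ (1 : Matrix p p α)) *ᵥ ψ) (i, k) = (D *ᵥ fun j => ψ (j, k)) i := by
  simp [mulVec, dotProduct, Fintype.sum_prod_type, one_apply]

lemma star_dotProduct_self_eq_sum_norm_sq [Fintype n] (v : n → ℂ) :
    star v ⬝ᵥ v = ((∑ i, ‖v i‖ ^ 2 : ℝ) : ℂ) := by
  simp [dotProduct, Complex.ofReal_sum, ← Complex.normSq_eq_norm_sq,
    Complex.normSq_eq_conj_mul_self]

lemma star_dotProduct_self_of_isUnitVec [Fintype n] {ψ : n → ℂ} (hψ : IsUnitVec ψ) :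
    star ψ ⬝ᵥ ψ = 1 := by
  rw [star_dotProduct_self_eq_sum_norm_sq, hψ, Complex.ofReal_one]

lemma sum_norm_sq_mulVec_le [Fintype m] [Fintype n] (A : Matrix m n ℂ) (v : n → ℂ) :
    ∑ i, ‖(A *ᵥ v) i‖ ^ 2 ≤ (∑ i, ∑ j, ‖A i j‖ ^ 2) * ∑ j, ‖v j‖ ^ 2 := by
  rw [Finset.sum_mul]
  gcongr with i
  calc ‖(A *ᵥ v) i‖ ^ 2 ≤ (∑ j, ‖A i j‖ * ‖v j‖) ^ 2 := by
        gcongr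
        simpa only [mulVec, dotProduct, norm_mul] using norm_sum_le _ fun j => A i j * v j
    _ ≤ _ := Finset.sum_mul_sq_le_sq_mul_sq _ _ _

section TraceNorm

variable [Fintype n] [DecidableEq n]

lemma traceNorm_eq_sum_sqrt_eigenvalues (A : Matrix n n ℂ) :
    traceNorm A = ∑ i, √((posSemidef_conjTranspose_mul_self A).1.eigenvalues i) := by
  rw [traceNorm, trace_mul_cycle, (mem_unitaryGroup_iff').mp (IsHermitian.eigenvectorUnitary _).2,
    one_mul]
  simp [trace, diag]

lemma traceNorm_nonneg (A : Matrix n n ℂ) : 0 ≤ traceNorm A := by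
  rw [traceNorm_eq_sum_sqrt_eigenvalues]
  positivity

open scoped MatrixOrder in
lemma traceNorm_eq_re_trace_of_mul_self_eq {A B : Matrix n n ℂ} (hB : B.PosSemidef)
    (hBA : B * B = Aᴴ * A) : traceNorm A = B.trace.re := by
  have hAA := posSemidef_conjTranspose_mul_self A
  -- `traceNorm A` is the trace of the spectral form of `CFC.sqrt (Aᴴ * A)`, which is `B`.
  rw [← CFC.sqrt_mul_self B hB.nonneg, hBA, CFC.sqrt_eq_real_sqrt _ hAA.nonneg, cfcₙ_eq_cfc,
    hAA.1.cfc_eq, IsHermitian.cfc, Unitary.conjStarAlgAut_apply]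
  rfl

lemma sum_norm_sq_entries_eq_sum_eigenvalues [Fintype m] (A : Matrix m n ℂ) :
    ∑ i, ∑ j, ‖A i j‖ ^ 2 = ∑ j, (posSemidef_conjTranspose_mul_self A).1.eigenvalues j := by
  calc ∑ i, ∑ j, ‖A i j‖ ^ 2 = (Aᴴ * A).trace.re := by
        rw [Finset.sum_comm, trace, Complex.re_sum]
        refine Finset.sum_congr rfl fun j _ => ?_
        rw [← Complex.ofReal_re (∑ i, ‖A i j‖ ^ 2), ← star_dotProduct_self_eq_sum_norm_sq]
        rfl
    _ = _ := by simp [(posSemidef_conjTranspose_mul_self A).1.trace_eq_sum_eigenvalues]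

lemma sum_norm_sq_entries_le_traceNorm_sq (A : Matrix n n ℂ) :
    ∑ i, ∑ j, ‖A i j‖ ^ 2 ≤ traceNorm A ^ 2 := by
  have hA := posSemidef_conjTranspose_mul_self A
  rw [sum_norm_sq_entries_eq_sum_eigenvalues, traceNorm_eq_sum_sqrt_eigenvalues]
  calc ∑ j, hA.1.eigenvalues j = ∑ j, √(hA.1.eigenvalues j) ^ 2 := by
        simp only [Real.sq_sqrt (hA.eigenvalues_nonneg _)]
    _ ≤ _ := Finset.sum_sq_le_sq_sum_of_nonneg fun _ _ => Real.sqrt_nonneg _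

lemma sum_norm_sq_mulVec_le_traceNorm_sq (A : Matrix n n ℂ) (v : n → ℂ) :
    ∑ i, ‖(A *ᵥ v) i‖ ^ 2 ≤ traceNorm A ^ 2 * ∑ j, ‖v j‖ ^ 2 :=
  (sum_norm_sq_mulVec_le A v).trans <| by
    gcongr
    exact sum_norm_sq_entries_le_traceNorm_sq A

lemma sum_norm_sq_kronecker_one_mulVec_le [Fintype p] [DecidableEq p] (D : Matrix n n ℂ)
    (ψ : n × p → ℂ) :
    ∑ x, ‖((D ⊗ₖ (1 : Matrix p p ℂ)) *ᵥ ψ) x‖ ^ 2 ≤ traceNorm D ^ 2 * ∑ x, ‖ψ x‖ ^ 2 := by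
  rw [Fintype.sum_prod_type_right, Fintype.sum_prod_type_right, Finset.mul_sum]
  refine Finset.sum_le_sum fun k _ => ?_
  simp_rw [kronecker_one_mulVec_apply]
  exact sum_norm_sq_mulVec_le_traceNorm_sq D _

lemma traceNorm_vecMulVec_star {ψ : n → ℂ} (hψ : IsUnitVec ψ) (u : n → ℂ) :
    traceNorm (vecMulVec u (star ψ)) = √(∑ i, ‖u i‖ ^ 2) := by
  set r := √(∑ i, ‖u i‖ ^ 2)
  have hu : star u ⬝ᵥ u = ((r ^ 2 : ℝ) : ℂ) := by
    rw [star_dotProduct_self_eq_sum_norm_sq, Real.sq_sqrt (by positivity)]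
  have hB : (r • vecMulVec ψ (star ψ)).PosSemidef :=
    (posSemidef_vecMulVec_self_star ψ).smul (Real.sqrt_nonneg _)
  rw [traceNorm_eq_re_trace_of_mul_self_eq hB]
  · simp [trace_vecMulVec, dotProduct_comm ψ, star_dotProduct_self_of_isUnitVec hψ]
  · simp only [smul_mul_smul, conjTranspose_vecMulVec, star_star, vecMulVec_mul_vecMulVec,
      star_dotProduct_self_of_isUnitVec hψ, hu, one_smul, vecMulVec_smul]
    rw [Complex.coe_smul, sq]

end TraceNorm

end Matrix

lemma outer_eq_vecMulVec {n : Type*} (v : n → ℂ) : outer v = Matrix.vecMulVec v (star v) := rfl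

theorem local_operator_traceNorm_bound_general
    {dA dE : ℕ}
    (ψ : Fin dA × Fin dE → ℂ) (hψ : IsUnitVec ψ)
    (M Q : Matrix (Fin dA) (Fin dA) ℂ) :
    traceNorm ((M ⊗ₖ (1 : Matrix (Fin dE) (Fin dE) ℂ)) * outer ψ
        - (Q ⊗ₖ (1 : Matrix (Fin dE) (Fin dE) ℂ)) * outer ψ)
      ≤ traceNorm (M - Q) := by
  rw [← sub_mul, ← Matrix.sub_kronecker, outer_eq_vecMulVec, Matrix.mul_vecMulVec,
    Matrix.traceNorm_vecMulVec_star hψ]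
  calc √(∑ x, ‖(((M - Q) ⊗ₖ (1 : Matrix (Fin dE) (Fin dE) ℂ)) *ᵥ ψ) x‖ ^ 2)
      ≤ √(traceNorm (M - Q) ^ 2) := by
        gcongr
        simpa [show ∑ x, ‖ψ x‖ ^ 2 = 1 from hψ] using
          Matrix.sum_norm_sq_kronecker_one_mulVec_le (M - Q) ψ
    _ = traceNorm (M - Q) := Real.sqrt_sq (Matrix.traceNorm_nonneg _)

theorem local_operator_traceNorm_bound
    {dA dE : ℕ} (hdA : 1 ≤ dA) (hdE : 1 ≤ dE)
    (ψ : Fin dA × Fin dE → ℂ) (hψ : IsUnitVec ψ)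
    (M Q : Matrix (Fin dA) (Fin dA) ℂ) :
    traceNorm ((M ⊗ₖ (1 : Matrix (Fin dE) (Fin dE) ℂ)) * outer ψ
        - (Q ⊗ₖ (1 : Matrix (Fin dE) (Fin dE) ℂ)) * outer ψ)
      ≤ traceNorm (M - Q) :=
  local_operator_traceNorm_bound_general ψ hψ M Q
end

section
/- Let N ≥ 5 be an odd natural number. Let θ ∈ [0, π/2] satisfy cos²θ = cos(π/N)/(1 + cos(π/N)), and for i ∈ {1, …, N} set φᵢ = i·π·(N−1)/N and define vectors in ℝ³: v₀ = (1, 0, 0) and vᵢ = (cos θ, sin θ · sin φᵢ, sin θ · cos φᵢ). Then: (a) each vᵢ (i = 0, 1, …, N) is a unit vector; (b) ⟨vᵢ, vᵢ₊₁⟩ = 0 for all i ∈ {1, …, N}, where v_{N+1} := v₁ (i.e., consecutive vectors around the cycle are orthogonal); (c) ⟨v₀, vᵢ⟩² = cos(π/N)/(1 + cos(π/N)) for every i ∈ {1, …, N}; and consequently (d) Σ_{i=1}^{N} ⟨v₀, vᵢ⟩² = N·cos(π/N)/(1 + cos(π/N)). -/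
/-!
All `vᵢ` with `i ≥ 1` lie on the cone of half-angle `θ` around `v₀`, so `⟨v₀, vᵢ⟩ = cos θ` and
`⟨vᵢ, vⱼ⟩ = cos² θ + sin² θ · cos (φᵢ - φⱼ)`. Consecutive azimuths, including the wrap-around
pair `φ_N, φ₁` when `N` is odd, differ by `π - π/N` modulo `2π`, so this inner product is
`cos² θ - c sin² θ` with `c = cos (π/N)`, which the choice of `θ` makes zero.
-/

open Real

noncomputable section

def coneVector (θ φ : ℝ) : Fin 3 → ℝ :=
  ![cos θ, sin θ * sin φ, sin θ * cos φ]

def cycleAngle (N i : ℕ) : ℝ :=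
  i * π * ((N : ℝ) - 1) / N

theorem sum_coneVector_sq (θ φ : ℝ) : ∑ k, coneVector θ φ k ^ 2 = 1 := by
  simp only [coneVector, Fin.sum_univ_three, Matrix.cons_val_zero, Matrix.cons_val_one,
    Matrix.cons_val_two, Matrix.head_cons, Matrix.tail_cons]
  linear_combination sin θ ^ 2 * sin_sq_add_cos_sq φ + cos_sq_add_sin_sq θ

theorem sum_coneVector_mul (θ φ ψ : ℝ) :
    ∑ k, coneVector θ φ k * coneVector θ ψ k = cos θ ^ 2 + sin θ ^ 2 * cos (φ - ψ) := by
  simp only [coneVector, Fin.sum_univ_three, Matrix.cons_val_zero, Matrix.cons_val_one,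
    Matrix.cons_val_two, Matrix.head_cons, Matrix.tail_cons, cos_sub]
  ring

theorem sum_axis_mul_coneVector (θ φ : ℝ) :
    ∑ k, ![1, 0, 0] k * coneVector θ φ k = cos θ := by
  simp [coneVector, Fin.sum_univ_three]

theorem sum_coneVector_mul_eq_zero {θ φ ψ c : ℝ} (hc : 1 + c ≠ 0)
    (hθ : cos θ ^ 2 = c / (1 + c)) (hφψ : cos (φ - ψ) = -c) :
    ∑ k, coneVector θ φ k * coneVector θ ψ k = 0 := by
  rw [sum_coneVector_mul, hφψ, sin_sq, hθ]
  field_simp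
  ring

theorem cycleAngle_sub_cycleAngle (N i j : ℕ) :
    cycleAngle N i - cycleAngle N j = ((i : ℝ) - j) * π * ((N : ℝ) - 1) / N := by
  unfold cycleAngle
  ring

theorem cos_cycleAngle_sub_succ {N : ℕ} (hN : N ≠ 0) (i : ℕ) :
    cos (cycleAngle N i - cycleAngle N (i + 1)) = -cos (π / N) := by
  have hstep : cycleAngle N i - cycleAngle N (i + 1) = -(π - π / N) := by
    rw [cycleAngle_sub_cycleAngle]
    field_simp
    push_cast
    ring
  rw [hstep, cos_neg, cos_pi_sub]

theorem cos_cycleAngle_sub_one {N : ℕ} (hN : Odd N) :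
    cos (cycleAngle N N - cycleAngle N 1) = -cos (π / N) := by
  obtain ⟨m, rfl⟩ := hN
  -- `(N - 1)² = 4m² = (2m - 1) N + 1`, an odd multiple of `π` plus `π / N`
  have hwrap : cycleAngle (2 * m + 1) (2 * m + 1) - cycleAngle (2 * m + 1) 1
      = π / (2 * m + 1 : ℕ) + π + (m : ℤ) * (2 * π) - 2 * π := by
    rw [cycleAngle_sub_cycleAngle]
    push_cast
    field_simp
    ring
  rw [hwrap, cos_sub_two_pi, cos_add_int_mul_two_pi, cos_add_pi]

theorem cos_cycleAngle_sub_next {N : ℕ} (hN : Odd N) {i : ℕ} (hi : i ≤ N) :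
    cos (cycleAngle N i - cycleAngle N (if i = N then 1 else i + 1)) = -cos (π / N) := by
  split_ifs with hiN
  · rw [hiN]
    exact cos_cycleAngle_sub_one hN
  · exact cos_cycleAngle_sub_succ (by omega) i

theorem one_add_cos_pi_div_pos {N : ℕ} (hN : 2 ≤ N) : 0 < 1 + cos (π / N) := by
  have hN' : (2 : ℝ) ≤ N := by exact_mod_cast hN
  have hcos : 0 ≤ cos (π / N) := by
    apply cos_nonneg_of_mem_Icc
    constructor
    · linarith [pi_pos, div_nonneg pi_pos.le (by linarith : (0 : ℝ) ≤ N)]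
    · exact div_le_div_of_nonneg_left pi_pos.le two_pos hN'
  linarith

end

theorem odd_cycle_optimal_strategy_general
    (N : ℕ) (hN : 5 ≤ N) (hNodd : Odd N)
    (θ : ℝ)
    (hθ : Real.cos θ ^ 2 = Real.cos (Real.pi / N) / (1 + Real.cos (Real.pi / N)))
    (φ : ℕ → ℝ) (hφ : ∀ i, φ i = i * Real.pi * ((N : ℝ) - 1) / N)
    (v : ℕ → Fin 3 → ℝ)
    (hv0 : v 0 = ![1, 0, 0])
    (hvi : ∀ i, 1 ≤ i → i ≤ N →
      v i = ![Real.cos θ, Real.sin θ * Real.sin (φ i), Real.sin θ * Real.cos (φ i)]) :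
    (∀ i ≤ N, ∑ k, v i k ^ 2 = 1) ∧
    (∀ i, 1 ≤ i → i ≤ N → ∑ k, v i k * v (if i = N then 1 else i + 1) k = 0) ∧
    (∀ i, 1 ≤ i → i ≤ N →
      (∑ k, v 0 k * v i k) ^ 2 = Real.cos (Real.pi / N) / (1 + Real.cos (Real.pi / N))) ∧
    (∑ i ∈ Finset.Icc 1 N, (∑ k, v 0 k * v i k) ^ 2
      = N * Real.cos (Real.pi / N) / (1 + Real.cos (Real.pi / N))) := by
  obtain rfl : φ = cycleAngle N := funext hφ
  have hv : ∀ i, 1 ≤ i → i ≤ N → v i = coneVector θ (cycleAngle N i) := hvi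
  have hv0v : ∀ i, 1 ≤ i → i ≤ N →
      (∑ k, v 0 k * v i k) ^ 2 = cos (π / N) / (1 + cos (π / N)) := fun i h1 hiN => by
    rw [hv0, hv i h1 hiN, sum_axis_mul_coneVector, hθ]
  refine ⟨fun i hiN => ?_, fun i h1 hiN => ?_, hv0v, ?_⟩
  · rcases i.eq_zero_or_pos with rfl | h1
    · simp [hv0, Fin.sum_univ_three]
    · rw [hv i h1 hiN, sum_coneVector_sq]
  · rw [hv i h1 hiN, hv _ (by split_ifs <;> omega) (by split_ifs <;> omega)]
    exact sum_coneVector_mul_eq_zero (one_add_cos_pi_div_pos (by omega)).ne' hθ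
      (cos_cycleAngle_sub_next hNodd hiN)
  · rw [Finset.sum_congr rfl fun i hi => hv0v i (Finset.mem_Icc.1 hi).1 (Finset.mem_Icc.1 hi).2,
      Finset.sum_const, Nat.card_Icc, Nat.add_sub_cancel, nsmul_eq_mul, mul_div_assoc]

theorem odd_cycle_optimal_strategy
    (N : ℕ) (hN : 5 ≤ N) (hNodd : Odd N)
    (θ : ℝ) (hθ0 : 0 ≤ θ) (hθπ : θ ≤ Real.pi / 2)
    (hθ : Real.cos θ ^ 2 = Real.cos (Real.pi / N) / (1 + Real.cos (Real.pi / N)))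
    (φ : ℕ → ℝ) (hφ : ∀ i, φ i = i * Real.pi * ((N : ℝ) - 1) / N)
    (v : ℕ → Fin 3 → ℝ)
    (hv0 : v 0 = ![1, 0, 0])
    (hvi : ∀ i, 1 ≤ i → i ≤ N →
      v i = ![Real.cos θ, Real.sin θ * Real.sin (φ i), Real.sin θ * Real.cos (φ i)]) :
    (∀ i ≤ N, ∑ k, v i k ^ 2 = 1) ∧
    (∀ i, 1 ≤ i → i ≤ N → ∑ k, v i k * v (if i = N then 1 else i + 1) k = 0) ∧
    (∀ i, 1 ≤ i → i ≤ N →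
      (∑ k, v 0 k * v i k) ^ 2 = Real.cos (Real.pi / N) / (1 + Real.cos (Real.pi / N))) ∧
    (∑ i ∈ Finset.Icc 1 N, (∑ k, v 0 k * v i k) ^ 2
      = N * Real.cos (Real.pi / N) / (1 + Real.cos (Real.pi / N))) :=
  odd_cycle_optimal_strategy_general N hN hNodd θ hθ φ hφ v hv0 hvi
end

section
/- For every natural number N ≥ 5, one has N·cos(π/N)/(1 + cos(π/N)) > (N − 1)/2. -/
theorem quantum_value_exceeds_nchv_bound (N : ℕ) (hN : 5 ≤ N) :
    (N : ℝ) * Real.cos (Real.pi / N) / (1 + Real.cos (Real.pi / N)) > ((N : ℝ) - 1) / 2 := by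
  have hN5 : (5 : ℝ) ≤ (N : ℝ) := by exact_mod_cast hN
  have hNpos : (0 : ℝ) < N := by linarith
  set c := Real.cos (Real.pi / N) with hc
  have hpi : Real.pi < 3.15 := Real.pi_lt_d2
  have hpi0 : 0 < Real.pi := Real.pi_pos
  have hlow : 1 - (Real.pi / N) ^ 2 / 2 ≤ c := Real.one_sub_sq_div_two_le_cos
  have hsq : (Real.pi / N) ^ 2 = Real.pi ^ 2 / (N : ℝ) ^ 2 := by ring
  have hp2 : Real.pi ^ 2 < 10 := by nlinarith
  have hN2 : (Real.pi / N) ^ 2 / 2 < 5 / (N : ℝ) ^ 2 := by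
    rw [hsq]
    rw [div_div, div_lt_div_iff₀ (by positivity) (by positivity)]
    nlinarith [mul_lt_mul_of_pos_right hp2 (show (0:ℝ) < (N:ℝ)^2 by positivity)]
  have hc5 : 1 - 5 / (N : ℝ) ^ 2 < c := by linarith
  have h5 : (N:ℝ)^2 * (1 - 5/(N:ℝ)^2) = (N:ℝ)^2 - 5 := by field_simp
  have hcgt : (N : ℝ) ^ 2 * c > (N : ℝ) ^ 2 - 5 := by
    calc (N:ℝ)^2 - 5 = (N:ℝ)^2 * (1 - 5/(N:ℝ)^2) := h5.symm
    _ < (N:ℝ)^2 * c := by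
        exact mul_lt_mul_of_pos_left hc5 (by positivity)
  have hc1 : c ≤ 1 := Real.cos_le_one _
  have hc0 : 0 < 1 + c := by nlinarith
  rw [gt_iff_lt, div_lt_div_iff₀ (by norm_num) hc0]
  nlinarith [sq_nonneg ((N:ℝ) - 5)]
end

section
/- Define the binary entropy function h : ℝ → ℝ by h(x) = −x·log₂(x) − (1−x)·log₂(1−x) for x ∈ (0,1) and h(0) = h(1) = 0. Fix a natural number N ≥ 5, and for each natural number n ≥ 1 set qₙ = 1/√n, mₙ = 2n(1−qₙ)·cos(π/N)/(1 + cos(π/N)), and Lₙ = n·[h(qₙ) + qₙ·log₂(2N) + (1−qₙ)·h(cos(π/N))/(1 + cos(π/N))] + 6. Then lim_{n→∞} (mₙ − Lₙ)/n = [2·cos(π/N) − h(cos(π/N))]/(1 + cos(π/N)). -/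
/-!
Dividing by `n`, the rate is `2(1 - qₙ)a - (h(qₙ) + qₙ log₂(2N) + (1 - qₙ)b) - 6/n` with
`a = cos(π/N)/(1 + cos(π/N))` and `b = h(cos(π/N))/(1 + cos(π/N))`. This is a continuous
function of `qₙ → 0` (as `h` is continuous, with `h(0) = 0`) plus `6/n → 0`, so it tends to
`2a - b`.
-/

/-- The binary entropy function, `h(x) = -x·log₂ x - (1-x)·log₂(1-x)` for `x ∈ (0,1)`,
with `h(0) = h(1) = 0`. -/
noncomputable def binEnt (x : ℝ) : ℝ :=
  if x = 0 ∨ x = 1 then 0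
  else -x * Real.logb 2 x - (1 - x) * Real.logb 2 (1 - x)

open Filter Topology

lemma binEnt_eq_binEntropy_div_log_two (x : ℝ) : binEnt x = Real.binEntropy x / Real.log 2 := by
  unfold binEnt
  rcases eq_or_ne x 0 with rfl | hx0
  · simp
  rcases eq_or_ne x 1 with rfl | hx1
  · simp
  rw [if_neg (by tauto), Real.binEntropy, Real.log_inv, Real.log_inv, Real.logb, Real.logb]
  ring

@[fun_prop]
lemma continuous_binEnt : Continuous binEnt := by
  simp only [funext binEnt_eq_binEntropy_div_log_two]
  fun_prop

lemma tendsto_one_div_sqrt_natCast_atTop :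
    Tendsto (fun n : ℕ => 1 / Real.sqrt n) atTop (𝓝 0) := by
  simp only [one_div]
  exact tendsto_inv_atTop_zero.comp (Real.tendsto_sqrt_atTop.comp tendsto_natCast_atTop_atTop)

lemma tendsto_net_rate {q : ℕ → ℝ} (hq : Tendsto q atTop (𝓝 0)) (a b c : ℝ) :
    Tendsto (fun n : ℕ =>
        (2 * n * (1 - q n) * a - (n * (binEnt (q n) + q n * b + (1 - q n) * c) + 6)) / n)
      atTop (𝓝 (2 * a - c)) := by
  set f : ℝ → ℝ := fun x => 2 * (1 - x) * a - (binEnt x + x * b + (1 - x) * c)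
  have hf : Tendsto (fun n => f (q n)) atTop (𝓝 (2 * a - c)) := by
    have hf0 : f 0 = 2 * a - c := by simp [f, binEnt]
    rw [← hf0]
    exact ((by fun_prop : Continuous f).tendsto 0).comp hq
  have h6 : Tendsto (fun n : ℕ => 6 / (n : ℝ)) atTop (𝓝 0) :=
    tendsto_const_div_atTop_nhds_zero_nat 6
  refine (by simpa using hf.sub h6 : Tendsto (fun n : ℕ => f (q n) - 6 / n) _ _).congr' ?_
  filter_upwards [eventually_ne_atTop 0] with n hn
  field_simp
  ring

theorem net_expansion_rate_limit_general
    (N : ℕ)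
    (q mlen L : ℕ → ℝ)
    (hq : ∀ n : ℕ, 1 ≤ n → q n = 1 / Real.sqrt n)
    (hm : ∀ n : ℕ, 1 ≤ n → mlen n =
      2 * n * (1 - q n) * Real.cos (Real.pi / N) / (1 + Real.cos (Real.pi / N)))
    (hL : ∀ n : ℕ, 1 ≤ n → L n =
      n * (binEnt (q n) + q n * Real.logb 2 (2 * N) +
        (1 - q n) * binEnt (Real.cos (Real.pi / N)) / (1 + Real.cos (Real.pi / N))) + 6) :
    Filter.Tendsto (fun n : ℕ => (mlen n - L n) / n) Filter.atTop
      (nhds ((2 * Real.cos (Real.pi / N) - binEnt (Real.cos (Real.pi / N))) /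
        (1 + Real.cos (Real.pi / N)))) := by
  set c := Real.cos (Real.pi / N)
  have hq0 : Tendsto q atTop (𝓝 0) :=
    tendsto_one_div_sqrt_natCast_atTop.congr' <| by
      filter_upwards [eventually_ge_atTop 1] with n hn
      exact (hq n hn).symm
  rw [sub_div, mul_div_assoc]
  refine (tendsto_net_rate hq0 (c / (1 + c)) (Real.logb 2 (2 * N)) (binEnt c / (1 + c))).congr' ?_
  filter_upwards [eventually_ge_atTop 1] with n hn
  rw [hm n hn, hL n hn, mul_div_assoc, mul_div_assoc]

theorem net_expansion_rate_limit
    (N : ℕ) (hN : 5 ≤ N)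
    (q mlen L : ℕ → ℝ)
    (hq : ∀ n : ℕ, 1 ≤ n → q n = 1 / Real.sqrt n)
    (hm : ∀ n : ℕ, 1 ≤ n → mlen n =
      2 * n * (1 - q n) * Real.cos (Real.pi / N) / (1 + Real.cos (Real.pi / N)))
    (hL : ∀ n : ℕ, 1 ≤ n → L n =
      n * (binEnt (q n) + q n * Real.logb 2 (2 * N) +
        (1 - q n) * binEnt (Real.cos (Real.pi / N)) / (1 + Real.cos (Real.pi / N))) + 6) :
    Filter.Tendsto (fun n : ℕ => (mlen n - L n) / n) Filter.atTop
      (nhds ((2 * Real.cos (Real.pi / N) - binEnt (Real.cos (Real.pi / N))) /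
        (1 + Real.cos (Real.pi / N)))) :=
  net_expansion_rate_limit_general N q mlen L hq hm hL
end
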